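/- Let F be a field of characteristic zero and c ∈ F nonzero. The equation a' = 1/(c·x) has no solution a in F(x), where ' denotes d/dx. -/

import Mathlib

/-!
Write `a = p / q` in lowest terms. Then `a' = W(q, p) / q²` with `W(q, p) = q p' - q' p`, so
`a' = 1 / (c x)` says `q² = c x W(q, p)`, hence `x ∣ q`. Writing `q = x^(k+1) r` with
`r(0) ≠ 0`, `W(q, p) = x^k (x W(r, p) - (k + 1) r p)`, and cancelling `x^(k+1)` leaves
`x^(k+1) r² = c (x W(r, p) - (k + 1) r p)`. At `x = 0` this gives `(k + 1) c r(0) p(0) = 0`, so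
`p(0) = 0` in characteristic zero, and `x` divides both `p` and `q`.
-/

open Polynomial

namespace Polynomial

theorem wronskian_X_sub_C_pow_succ_mul {R : Type*} [CommRing R] (t : R) (k : ℕ) (r p : R[X]) :
    wronskian ((X - C t) ^ (k + 1) * r) p =
      (X - C t) ^ k * ((X - C t) * wronskian r p - ((k : R[X]) + 1) * r * p) := by
  simp only [wronskian, derivative_mul, derivative_X_sub_C_pow, Nat.add_sub_cancel, C_eq_natCast]
  push_cast
  ring

theorem sq_ne_C_mul_X_sub_C_mul_wronskian {F : Type*} [Field F] [CharZero F] {p q : F[X]}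
    (hpq : IsCoprime p q) (hq : q ≠ 0) (c t : F) :
    q ^ 2 ≠ C c * (X - C t) * wronskian q p := by
  intro h
  have hc : c ≠ 0 := by
    rintro rfl
    exact hq (pow_eq_zero_iff two_ne_zero |>.mp (by simpa using h))
  have hroot : q.IsRoot t := by
    rw [← dvd_iff_isRoot]
    exact (prime_X_sub_C t).dvd_of_dvd_pow (n := 2) ⟨C c * wronskian q p, by rw [h]; ring⟩
  obtain ⟨r, hqr, hr⟩ := exists_eq_pow_rootMultiplicity_mul_and_not_dvd q hq t
  obtain ⟨k, hk⟩ := Nat.exists_eq_add_one.mpr ((rootMultiplicity_pos hq).mpr hroot)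
  rw [hk] at hqr
  have hp : p.eval t ≠ 0 := fun hp => (prime_X_sub_C t).not_isUnit <|
    hpq.isUnit_of_dvd' (dvd_iff_isRoot.mpr hp) (hqr ▸ (dvd_pow_self _ k.succ_ne_zero).mul_right r)
  have hcancel : (X - C t) ^ (k + 1) * r ^ 2 =
      C c * ((X - C t) * wronskian r p - ((k : F[X]) + 1) * r * p) := by
    refine mul_left_cancel₀ (pow_ne_zero (k + 1) (X_sub_C_ne_zero t)) ?_
    rw [hqr, wronskian_X_sub_C_pow_succ_mul] at h
    linear_combination h
  replace hr : r.eval t ≠ 0 := fun hr0 => hr (dvd_iff_isRoot.mpr hr0)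
  simpa [hc, Nat.cast_add_one_ne_zero, hr, hp] using congrArg (eval t) hcancel

end Polynomial

namespace RatFunc

variable {F : Type*} [Field F]

theorem derivation_algebraMap (d : Derivation F (RatFunc F) (RatFunc F)) (hd : d X = 1)
    (p : F[X]) :
    d (algebraMap F[X] (RatFunc F) p) = algebraMap F[X] (RatFunc F) (derivative p) := by
  simpa [hd] using d.map_aeval p X

theorem derivation_eq_wronskian_div (d : Derivation F (RatFunc F) (RatFunc F)) (hd : d X = 1)
    (a : RatFunc F) :
    d a = algebraMap F[X] (RatFunc F) (wronskian a.denom a.num) /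
      algebraMap F[X] (RatFunc F) (a.denom ^ 2) := by
  have hq : algebraMap F[X] (RatFunc F) a.denom ≠ 0 := algebraMap_ne_zero a.denom_ne_zero
  conv_lhs => rw [← num_div_denom a]
  rw [Derivation.leibniz_div, derivation_algebraMap d hd, derivation_algebraMap d hd]
  simp only [wronskian, map_sub, map_mul, map_pow, smul_eq_mul]
  field_simp

end RatFunc

/-- For `c ∈ F` nonzero, the equation `a' = 1/(c·x)` has no solution in `F(x)`. -/
theorem no_rational_antiderivative_of_inv_cx
    (F : Type*) [Field F] [CharZero F]
    (d : Derivation F (RatFunc F) (RatFunc F)) (hd : d RatFunc.X = 1)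
    (c : F) (hc : c ≠ 0) :
    ¬ ∃ a : RatFunc F, d a = 1 / (RatFunc.C c * RatFunc.X) := by
  rintro ⟨a, ha⟩
  have hcX : RatFunc.C c * RatFunc.X = algebraMap F[X] (RatFunc F) (C c * (X - C 0)) := by
    simp [RatFunc.algebraMap_C, RatFunc.algebraMap_X]
  rw [RatFunc.derivation_eq_wronskian_div d hd, hcX, div_eq_div_iff, one_mul, ← map_mul] at ha
  · exact sq_ne_C_mul_X_sub_C_mul_wronskian (RatFunc.isCoprime_num_denom a) a.denom_ne_zero c 0
      (by rw [RatFunc.algebraMap_injective F ha.symm]; ring)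
  · exact RatFunc.algebraMap_ne_zero (pow_ne_zero 2 a.denom_ne_zero)
  · exact RatFunc.algebraMap_ne_zero (by simp [hc, X_ne_zero])
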